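/- In ZF with Turing determinacy, every function f : 𝒟 → ℝ from the Turing degrees to the reals has countable range over some upper cone: there is a degree x such that {f(y) : y ≥ x} is countable. -/

import Mathlib

/-- Relativized partial recursiveness: `f` is partial recursive in the oracle `O`. -/
inductive RecursiveIn' (O : ℕ →. ℕ) : (ℕ →. ℕ) → Prop
  | oracle : RecursiveIn' O O
  | zero : RecursiveIn' O (pure 0)
  | succ : RecursiveIn' O Nat.succ
  | left : RecursiveIn' O ↑fun n : ℕ => n.unpair.1
  | right : RecursiveIn' O ↑fun n : ℕ => n.unpair.2
  | pair {f g} : RecursiveIn' O f → RecursiveIn' O g →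
      RecursiveIn' O fun n => Nat.pair <$> f n <*> g n
  | comp {f g} : RecursiveIn' O f → RecursiveIn' O g →
      RecursiveIn' O fun n => g n >>= f
  | prec {f g} : RecursiveIn' O f → RecursiveIn' O g →
      RecursiveIn' O (Nat.unpaired fun a n =>
        n.rec (f a) fun y IH => do let i ← IH; g (Nat.pair a (Nat.pair y i)))
  | rfind {f} : RecursiveIn' O f →
      RecursiveIn' O fun a => Nat.rfind fun n => (fun m => m = 0) <$> f (Nat.pair a n)

theorem RecursiveIn'.trans' {O O' f : ℕ →. ℕ}
    (hf : RecursiveIn' O f) (hO : RecursiveIn' O' O) : RecursiveIn' O' f := by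
  induction hf with
  | oracle => exact hO
  | zero => exact .zero
  | succ => exact .succ
  | left => exact .left
  | right => exact .right
  | pair _ _ ih₁ ih₂ => exact .pair ih₁ ih₂
  | comp _ _ ih₁ ih₂ => exact .comp ih₁ ih₂
  | prec _ _ ih₁ ih₂ => exact .prec ih₁ ih₂
  | rfind _ ih => exact .rfind ih

/-- Reals are identified with elements of Cantor space `2^ω`. -/
abbrev TReal : Type := ℕ → Bool

/-- The characteristic (total) function of a real, as a partial function on `ℕ`. -/
def charFn (x : TReal) : ℕ →. ℕ := fun n => Part.some (cond (x n) 1 0)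

/-- Turing reducibility `x ≤ᵀ y` between reals. -/
def TuringLE (x y : TReal) : Prop := RecursiveIn' (charFn y) (charFn x)

theorem TuringLE.refl (x : TReal) : TuringLE x x := RecursiveIn'.oracle

theorem TuringLE.trans {x y z : TReal} (h₁ : TuringLE x y) (h₂ : TuringLE y z) :
    TuringLE x z := RecursiveIn'.trans' h₁ h₂

/-- Turing equivalence of reals. -/
def TuringEquiv (x y : TReal) : Prop := TuringLE x y ∧ TuringLE y x

instance turingSetoid : Setoid TReal :=
  ⟨TuringEquiv, fun x => ⟨TuringLE.refl x, TuringLE.refl x⟩, fun h => ⟨h.2, h.1⟩,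
    fun h₁ h₂ => ⟨h₁.1.trans h₂.1, h₂.2.trans h₁.2⟩⟩

/-- The Turing degrees. -/
def TuringDegree' : Type := Quotient turingSetoid

/-- The Turing degree of a real. -/
def deg (x : TReal) : TuringDegree' := Quotient.mk _ x

instance : PartialOrder TuringDegree' where
  le := Quotient.lift₂ TuringLE (by
    rintro a b a' b' ⟨hab, hba⟩ ⟨hcd, hdc⟩
    exact propext ⟨fun h => (hba.trans h).trans hcd, fun h => (hab.trans h).trans hdc⟩)
  le_refl := fun d => Quotient.inductionOn d TuringLE.refl
  le_trans := fun a b c => Quotient.inductionOn₃ a b c fun _ _ _ h₁ h₂ => TuringLE.trans h₁ h₂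
  le_antisymm := fun a b => Quotient.inductionOn₂ a b fun _ _ h₁ h₂ => Quotient.sound ⟨h₁, h₂⟩

/-- The upper cone of Turing degrees above `x`. -/
def upperCone (x : TuringDegree') : Set TuringDegree' := {y | x ≤ y}

/-- Turing determinacy: every set of Turing degrees contains or is disjoint from
an upper cone. -/
def TD : Prop :=
  ∀ A : Set TuringDegree', (∃ x, upperCone x ⊆ A) ∨ (∃ x, upperCone x ⊆ Aᶜ)

/-- The countable choice axiom for sets of reals. -/
def CCR : Prop :=
  ∀ A : ℕ → Set TReal, (∀ n, (A n).Nonempty) → ∃ f : ℕ → TReal, ∀ n, f n ∈ A n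

/-!
Each bit `d ↦ f d n` is a two-valued function of the degree, so by Turing determinacy it is
constant on some cone. The join of the countably many cone bases lies above all of them, so on
the cone above the join `f` is constant and its image there is a single real.
-/

theorem RecursiveIn'.of_partrec {O f : ℕ →. ℕ} (hf : Nat.Partrec f) : RecursiveIn' O f := by
  induction hf with
  | zero => exact .zero
  | succ => exact .succ
  | left => exact .left
  | right => exact .right
  | pair _ _ ih₁ ih₂ => exact .pair ih₁ ih₂
  | comp _ _ ih₁ ih₂ => exact .comp ih₁ ih₂
  | prec _ _ ih₁ ih₂ => exact .prec ih₁ ih₂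
  | rfind _ ih => exact .rfind ih

theorem TuringLE.comp_primrec {g : ℕ → ℕ} (hg : Primrec g) (y : TReal) :
    TuringLE (y ∘ g) y := by
  have hg' : Nat.Partrec (fun n => Part.some (g n)) :=
    Nat.Partrec.of_primrec (Primrec.nat_iff.mp hg)
  have hcomp : charFn (y ∘ g) = fun n => Part.some (g n) >>= charFn y := by
    funext n
    exact (Part.bind_some _ _).symm
  rw [TuringLE, hcomp]
  exact .comp .oracle (.of_partrec hg')

/-- The recursive join `⊕ₙ gₙ`, with the `n`-th column at the positions `Nat.pair n m`. -/
def joinReal (g : ℕ → TReal) : TReal := fun k => g k.unpair.1 k.unpair.2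

theorem le_joinReal (g : ℕ → TReal) (n : ℕ) : TuringLE (g n) (joinReal g) := by
  have h := TuringLE.comp_primrec (Primrec₂.natPair.comp (Primrec.const n) Primrec.id)
    (joinReal g)
  convert h using 1
  funext m
  simp [joinReal]

theorem TuringDegree'.exists_forall_le_of_nat (c : ℕ → TuringDegree') : ∃ x, ∀ n, c n ≤ x :=
  ⟨deg (joinReal fun n => (c n).out), fun n => by
    conv_lhs => rw [← Quotient.out_eq (c n)]
    exact le_joinReal _ n⟩

theorem TuringDegree'.exists_forall_le {ι : Type*} [Countable ι] (c : ι → TuringDegree') :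
    ∃ x, ∀ i, c i ≤ x := by
  rcases isEmpty_or_nonempty ι with _ | _
  · exact ⟨deg default, isEmptyElim⟩
  obtain ⟨e, he⟩ := exists_surjective_nat ι
  obtain ⟨x, hx⟩ := exists_forall_le_of_nat (c ∘ e)
  exact ⟨x, fun i => (he i).elim fun n hn => hn ▸ hx n⟩

theorem upperCone_subset_upperCone {x y : TuringDegree'} (h : x ≤ y) :
    upperCone y ⊆ upperCone x :=
  fun _ hd => le_trans h hd

theorem TD.exists_upperCone_eq_const {α : Type*} [Countable α] (td : TD)
    (p : TuringDegree' → α) : ∃ c b, ∀ d ∈ upperCone c, p d = b := by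
  -- Otherwise every fiber of `p` avoids a cone, and a degree `x` above all these cones
  -- lies outside its own fiber `p ⁻¹' {p x}`.
  by_contra! hp
  have hfiber (b : α) : ∃ c, upperCone c ⊆ {d | p d = b}ᶜ :=
    (td {d | p d = b}).resolve_left fun ⟨c, hc⟩ =>
      let ⟨d, hd, hne⟩ := hp c b
      hne (hc hd)
  choose c hc using hfiber
  obtain ⟨x, hcx⟩ := TuringDegree'.exists_forall_le c
  exact hc (p x) (hcx (p x)) rfl

theorem TD.exists_upperCone_eq_const_fun {ι α : Type*} [Countable ι] [Countable α] (td : TD)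
    (f : TuringDegree' → ι → α) :
    ∃ x b, ∀ d ∈ upperCone x, f d = b := by
  choose c b hb using fun i => td.exists_upperCone_eq_const (f · i)
  obtain ⟨x, hcx⟩ := TuringDegree'.exists_forall_le c
  exact ⟨x, b, fun d hd => funext fun i => hb i d (upperCone_subset_upperCone (hcx i) hd)⟩

/-- Under TD, every `f : 𝒟 → ℝ` has countable range over some upper cone. -/
theorem range_countable_on_cone (td : TD) (f : TuringDegree' → TReal) :
    ∃ x : TuringDegree', (Set.image f (upperCone x)).Countable := by
  obtain ⟨x, b, hb⟩ := td.exists_upperCone_eq_const_fun f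
  refine ⟨x, (Set.countable_singleton b).mono ?_⟩
  rintro _ ⟨d, hd, rfl⟩
  exact hb d hd
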